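/- arXiv:1701.04347 — 5 statements merged into one kernel-verified Lean document; each statement's English description precedes it below -/
import Mathlib

section
/- Every quotient of an inverse semi-rational finite group is inverse semi-rational. -/
/-- An element `x` of a group is inverse semi-rational if for every integer `j`
coprime to the order of `x`, `x ^ j` is conjugate to `x` or to `x⁻¹`. -/
def IsInvSemiRationalElem {G : Type*} [Group G] (x : G) : Prop :=
  ∀ j : ℤ, Int.gcd j (orderOf x) = 1 → IsConj (x ^ j) x ∨ IsConj (x ^ j) x⁻¹

/-- A group is inverse semi-rational if all its elements are. -/
def IsInvSemiRational (G : Type*) [Group G] : Prop :=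
  ∀ x : G, IsInvSemiRationalElem x

theorem stmt_5 {G : Type*} [Group G] [Finite G] (h : IsInvSemiRational G)
    (N : Subgroup G) [N.Normal] : IsInvSemiRational (G ⧸ N) := by
  intro y
  obtain ⟨x, rfl⟩ := QuotientGroup.mk_surjective y
  intro j hj
  set f := QuotientGroup.mk' N with hf
  have hxx : (x : G ⧸ N) = f x := rfl
  set n := orderOf ((x : G ⧸ N)) with hn
  set m := orderOf x with hm
  have hmpos : 0 < m := orderOf_pos x
  haveI : NeZero m := ⟨hmpos.ne'⟩
  have hd : n ∣ m := by
    rw [hn, hm, hxx]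
    exact orderOf_map_dvd f x
  have hj' : Nat.Coprime j.natAbs n := by
    simpa [Int.gcd] using hj
  have hju : IsUnit ((j : ZMod n)) := by
    rcases Int.natAbs_eq j with hje | hje
    · rw [hje, Int.cast_natCast]
      exact (ZMod.unitOfCoprime _ hj').isUnit
    · rw [hje, Int.cast_neg, Int.cast_natCast]
      exact ((ZMod.unitOfCoprime _ hj').isUnit).neg
  obtain ⟨v, hv⟩ := ZMod.unitsMap_surjective hd hju.unit
  set k : ℕ := (v : ZMod m).val with hk
  have hkcop : Nat.Coprime k m := ZMod.val_coe_unit_coprime v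
  have hconj := h x (k : ℤ) (by simpa [Int.gcd_natCast_natCast] using hkcop)
  have h1 : ZMod.cast ((v : ZMod m)) = ((j : ZMod n)) := by
    have := congrArg (Units.val) hv
    simpa [ZMod.unitsMap, IsUnit.unit_spec, ZMod.castHom_apply] using this
  have h3 : ((k : ZMod n)) = ((j : ZMod n)) := by
    rw [← h1, hk, ZMod.natCast_val]
  have hcast : ((k : ℤ) : ZMod n) = ((j : ℤ) : ZMod n) := by
    rw [Int.cast_natCast]
    exact h3
  have heq : (x : G ⧸ N) ^ j = (x : G ⧸ N) ^ (k : ℤ) := by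
    rw [zpow_eq_zpow_iff_modEq, ← hn]
    exact ((ZMod.intCast_eq_intCast_iff _ _ _).mp hcast.symm)
  rw [heq, zpow_natCast]
  have hfk : (x : G ⧸ N) ^ k = f (x ^ k) := by simp [hxx]
  rw [hfk, ← zpow_natCast x k]
  rcases hconj with hc | hc
  · exact Or.inl (f.map_isConj hc)
  · right
    have := f.map_isConj hc
    simpa [← hxx] using this
end

section
/- If G is an inverse semi-rational finite group whose order is divisible by 7, then the order of G is divisible by 3. -/
section

variable {G : Type*} [Group G]

theorem IsInvSemiRationalElem.exists_conj_eq_zpow {x : G} (hx : IsInvSemiRationalElem x)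
    {j : ℤ} (hj : Int.gcd j (orderOf x) = 1) :
    ∃ g : G, g * x * g⁻¹ = x ^ j ∨ g * x * g⁻¹ = x ^ (-j) := by
  rcases hx j hj with hconj | hconj
  · obtain ⟨g, hg⟩ := isConj_iff.mp hconj.symm
    exact ⟨g, Or.inl hg⟩
  · obtain ⟨g, hg⟩ := isConj_iff.mp hconj.symm
    refine ⟨g, Or.inr ?_⟩
    rw [zpow_neg, ← hg, conj_inv, inv_inv]

theorem conj_pow_eq_zpow_pow {g x : G} {k : ℤ} (hg : g * x * g⁻¹ = x ^ k) (m : ℕ) :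
    g ^ m * x * (g ^ m)⁻¹ = x ^ (k ^ m) := by
  induction m with
  | zero => simp
  | succ m ih =>
    calc g ^ (m + 1) * x * (g ^ (m + 1))⁻¹ = g * (g ^ m * x * (g ^ m)⁻¹) * g⁻¹ := by group
      _ = (g * x * g⁻¹) ^ k ^ m := by rw [ih, conj_zpow]
      _ = x ^ k ^ (m + 1) := by rw [hg, ← zpow_mul, pow_succ']

theorem orderOf_intCast_dvd_orderOf_of_conj_eq_zpow {g x : G} {k : ℤ}
    (hg : g * x * g⁻¹ = x ^ k) : orderOf (k : ZMod (orderOf x)) ∣ orderOf g := by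
  apply orderOf_dvd_of_pow_eq_one
  have hx : x ^ (k ^ orderOf g) = x ^ (1 : ℤ) := by
    rw [← conj_pow_eq_zpow_pow hg, pow_orderOf_eq_one, one_mul, inv_one, mul_one, zpow_one]
  exact_mod_cast (ZMod.intCast_eq_intCast_iff _ _ _).mpr (zpow_eq_zpow_iff_modEq.mp hx)

end

theorem stmt_6 {G : Type*} [Group G] [Finite G] (h : IsInvSemiRational G)
    (h7 : 7 ∣ Nat.card G) : 3 ∣ Nat.card G := by
  obtain ⟨x, hx⟩ := have : Fact (Nat.Prime 7) := ⟨by norm_num⟩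
    exists_prime_orderOf_dvd_card' 7 h7
  obtain ⟨g, hg⟩ := (h x).exists_conj_eq_zpow (j := 2) (by rw [hx]; decide)
  obtain ⟨k, hk, hgk⟩ : ∃ k : ℤ, (k : ZMod 7) ^ 2 = 4 ∧ g * x * g⁻¹ = x ^ k :=
    hg.elim (fun hg ↦ ⟨2, by decide, hg⟩) (fun hg ↦ ⟨-2, by decide, hg⟩)
  have h4 : orderOf (4 : ZMod 7) = 3 := orderOf_eq_prime (by decide) (by decide)
  calc 3 = orderOf ((k : ZMod 7) ^ 2) := by rw [hk, h4]
    _ ∣ orderOf (k : ZMod 7) := orderOf_pow_dvd 2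
    _ ∣ orderOf g := by rw [← hx]; exact orderOf_intCast_dvd_orderOf_of_conj_eq_zpow hgk
    _ ∣ Nat.card G := orderOf_dvd_natCard g
end

section
/- If G is an inverse semi-rational finite group whose order is divisible by 5, then the order of G is divisible by 4. -/
section

variable {G : Type*} [Group G]

lemma pow_mul_mul_inv_pow_eq_zpow_pow {g x : G} {k : ℤ} (h : g * x * g⁻¹ = x ^ k) (n : ℕ) :
    g ^ n * x * (g ^ n)⁻¹ = x ^ (k ^ n) := by
  induction n with
  | zero => simp
  | succ n ih =>
    calc g ^ (n + 1) * x * (g ^ (n + 1))⁻¹ = g * (g ^ n * x * (g ^ n)⁻¹) * g⁻¹ := by group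
      _ = (g * x * g⁻¹) ^ (k ^ n) := by rw [ih, conj_zpow]
      _ = x ^ (k ^ (n + 1)) := by rw [h, ← zpow_mul, pow_succ']

lemma orderOf_intCast_dvd_orderOf_of_mul_mul_inv_eq_zpow {g x : G} {k : ℤ}
    (h : g * x * g⁻¹ = x ^ k) : orderOf (k : ZMod (orderOf x)) ∣ orderOf g := by
  apply orderOf_dvd_of_pow_eq_one
  have hfix : x ^ (k ^ orderOf g) = x ^ (1 : ℤ) := by
    rw [← pow_mul_mul_inv_pow_eq_zpow_pow h, pow_orderOf_eq_one]
    group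
  rw [← Int.cast_pow, ← Int.cast_one, ZMod.intCast_eq_intCast_iff]
  exact zpow_eq_zpow_iff_modEq.mp hfix

lemma exists_mul_mul_inv_eq_zpow_or_zpow_neg {x : G} {j : ℤ}
    (h : IsConj (x ^ j) x ∨ IsConj (x ^ j) x⁻¹) :
    ∃ g : G, g * x * g⁻¹ = x ^ j ∨ g * x * g⁻¹ = x ^ (-j) := by
  rcases h with h | h
  · obtain ⟨g, hg⟩ := isConj_iff.mp h.symm
    exact ⟨g, Or.inl hg⟩
  · obtain ⟨c, hc⟩ := isConj_iff.mp h
    have hxj : x ^ j = c⁻¹ * x⁻¹ * c := by rw [← hc]; group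
    exact ⟨c⁻¹, Or.inr (by rw [zpow_neg, hxj]; group)⟩

end

lemma orderOf_two_zmod_five : orderOf ((2 : ℤ) : ZMod 5) = 4 := by
  rw [orderOf_eq_iff (by norm_num)]; decide

lemma orderOf_neg_two_zmod_five : orderOf ((-2 : ℤ) : ZMod 5) = 4 := by
  rw [orderOf_eq_iff (by norm_num)]; decide

theorem stmt_7 {G : Type*} [Group G] [Finite G] (h : IsInvSemiRational G)
    (h5 : 5 ∣ Nat.card G) : 4 ∣ Nat.card G := by
  have : Fact (Nat.Prime 5) := ⟨by norm_num⟩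
  obtain ⟨x, hx⟩ := exists_prime_orderOf_dvd_card' 5 h5
  obtain ⟨g, hg⟩ := exists_mul_mul_inv_eq_zpow_or_zpow_neg (h x 2 (by rw [hx]; rfl))
  have h4 : 4 ∣ orderOf g := by
    rcases hg with hg | hg
    · have := orderOf_intCast_dvd_orderOf_of_mul_mul_inv_eq_zpow hg
      rwa [hx, orderOf_two_zmod_five] at this
    · have := orderOf_intCast_dvd_orderOf_of_mul_mul_inv_eq_zpow hg
      rwa [hx, orderOf_neg_two_zmod_five] at this
  exact h4.trans (orderOf_dvd_natCard g)
end

section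
/- The generalized quaternion group Q_{2^n} of order 2^n (n ≥ 3) is inverse semi-rational if and only if n = 3. -/
/-- Any element of order dividing 4 is inverse semi-rational. -/
lemma isInvSemiRationalElem_of_pow_four {G : Type*} [Group G] (x : G) (h : x ^ (4 : ℕ) = 1) :
    IsInvSemiRationalElem x := by
  intro j hj
  have h4 : x ^ (4 : ℤ) = 1 := by rw [show ((4 : ℤ) = ((4 : ℕ) : ℤ)) by norm_num, zpow_natCast, h]
  by_cases h1 : x = 1
  · left; simp [h1]
  have ho : orderOf x ∣ 4 := orderOf_dvd_of_pow_eq_one h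
  have ho1 : orderOf x ≠ 1 := by simpa [orderOf_eq_one_iff] using h1
  have hle : orderOf x ≤ 4 := Nat.le_of_dvd (by norm_num) ho
  have h2 : 2 ∣ orderOf x := by interval_cases h : (orderOf x) <;> omega
  have hjodd : ¬ (2 : ℤ) ∣ j := by
    intro hd
    have : (2 : ℤ) ∣ (Int.gcd j (orderOf x) : ℤ) :=
      Int.dvd_coe_gcd hd (by exact_mod_cast Int.natCast_dvd_natCast.mpr h2)
    rw [hj] at this
    norm_num at this
  have hmod : j % 4 = 1 ∨ j % 4 = 3 := by omega
  have key : x ^ j = x ^ (j % 4) := by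
    conv_lhs => rw [← Int.emod_add_mul_ediv j 4]
    rw [zpow_add, zpow_mul, h4, one_zpow, mul_one]
  rcases hmod with hm | hm
  · left; rw [key, hm, zpow_one]
  · right
    rw [key, hm, show (3 : ℤ) = 4 + (-1) by ring, zpow_add, h4, one_mul, zpow_neg_one]

lemma q8_pow_four (x : QuaternionGroup 2) : x ^ (4 : ℕ) = 1 := by
  revert x; decide

/-- `QuaternionGroup (2 ^ (n - 2))` is the generalized quaternion group of order `2 ^ n`. -/
theorem stmt_10 (n : ℕ) (hn : 3 ≤ n) :
    IsInvSemiRational (QuaternionGroup (2 ^ (n - 2))) ↔ n = 3 := by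
  constructor
  · intro hisr
    by_contra hne
    have hn4 : 4 ≤ n := by omega
    set m : ℕ := 2 ^ (n - 2) with hm
    have hm4 : 4 ≤ m := by
      calc 4 = 2 ^ 2 := by norm_num
        _ ≤ 2 ^ (n - 2) := Nat.pow_le_pow_right (by norm_num) (by omega)
    have horder : orderOf (QuaternionGroup.a 1 : QuaternionGroup m) = 2 * m :=
      QuaternionGroup.orderOf_a_one
    have hgcd : Int.gcd 3 (orderOf (QuaternionGroup.a 1 : QuaternionGroup m)) = 1 := by
      rw [horder]
      have : Nat.Coprime 3 (2 * m) := by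
        rw [hm, show 2 * 2 ^ (n - 2) = 2 ^ (n - 1) by
          rw [← pow_succ']; congr 1; omega]
        exact Nat.Coprime.pow_right _ (by norm_num)
      exact (Int.gcd_natCast_natCast 3 (2 * m)).trans this
    have hpow : (QuaternionGroup.a 1 : QuaternionGroup m) ^ (3 : ℤ) = QuaternionGroup.a 3 := by
      rw [show ((3 : ℤ) = ((3 : ℕ) : ℤ)) by norm_num, zpow_natCast,
        QuaternionGroup.a_one_pow]
      norm_num
    have hinv : (QuaternionGroup.a 1 : QuaternionGroup m)⁻¹ = QuaternionGroup.a (-1) := by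
      rw [eq_comm, eq_inv_iff_mul_eq_one, QuaternionGroup.a_mul_a]
      rw [neg_add_cancel]; exact QuaternionGroup.one_def.symm
    have hcontra : (3 : ZMod (2 * m)) = 1 ∨ (3 : ZMod (2 * m)) = -1 := by
      rcases hisr (QuaternionGroup.a 1) 3 hgcd with h | h
      · rw [hpow] at h
        rcases h with ⟨c, hc⟩
        rcases c with i | i
        · rw [SemiconjBy, QuaternionGroup.a_mul_a, QuaternionGroup.a_mul_a,
            QuaternionGroup.a.injEq] at hc
          left; linear_combination hc
        · rw [SemiconjBy, QuaternionGroup.xa_mul_a, QuaternionGroup.a_mul_xa,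
            QuaternionGroup.xa.injEq] at hc
          right; linear_combination hc
      · rw [hpow, hinv] at h
        rcases h with ⟨c, hc⟩
        rcases c with i | i
        · rw [SemiconjBy, QuaternionGroup.a_mul_a, QuaternionGroup.a_mul_a,
            QuaternionGroup.a.injEq] at hc
          right; linear_combination hc
        · rw [SemiconjBy, QuaternionGroup.xa_mul_a, QuaternionGroup.a_mul_xa,
            QuaternionGroup.xa.injEq] at hc
          left; linear_combination hc
    have hdvd : 2 * m ∣ 2 ∨ 2 * m ∣ 4 := by
      rcases hcontra with h | h
      · left
        have : ((2 : ℕ) : ZMod (2 * m)) = 0 := by push_cast; linear_combination h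
        exact (ZMod.natCast_eq_zero_iff 2 (2 * m)).mp this
      · right
        have : ((4 : ℕ) : ZMod (2 * m)) = 0 := by push_cast; linear_combination h
        exact (ZMod.natCast_eq_zero_iff 4 (2 * m)).mp this
    rcases hdvd with h | h
    · have := Nat.le_of_dvd (by norm_num) h; omega
    · have := Nat.le_of_dvd (by norm_num) h; omega
  · intro h
    subst h
    show IsInvSemiRational (QuaternionGroup 2)
    exact fun x => isInvSemiRationalElem_of_pow_four x (q8_pow_four x)
end

section
/- Let G be a finite inverse semi-rational group, let p be an odd prime, and suppose a Sylow p-subgroup P of G is cyclic. Then |P| ≤ p. -/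
open Subgroup

theorem IsConj.inv {α : Type*} [Group α] {a b : α} (h : IsConj a b) : IsConj a⁻¹ b⁻¹ := by
  obtain ⟨c, rfl⟩ := isConj_iff.mp h
  exact isConj_iff.mpr ⟨c, conj_inv.symm⟩

theorem Int.gcd_orderOf_eq_one_of_zpow_zpow_eq_self {G : Type*} [Group G] {x : G} {k m : ℤ}
    (h : (x ^ k) ^ m = x) : Int.gcd k (orderOf x) = 1 := by
  obtain ⟨t, ht⟩ : (orderOf x : ℤ) ∣ k * m - 1 :=
    orderOf_dvd_sub_iff_zpow_eq_zpow.mpr (by rw [zpow_mul, h, zpow_one])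
  exact Int.isCoprime_iff_gcd_eq_one.mp ⟨m, -t, by linear_combination ht⟩

namespace Subgroup

variable {G : Type*} [Group G]

theorem index_le_two_of_forall_mem_or_mul_mem {K : Subgroup G} (a : G)
    (h : ∀ b, b ∈ K ∨ a * b ∈ K) : K.index ≤ 2 := by
  have hsurj : Function.Surjective fun t : Bool ↦ ((cond t 1 a⁻¹ : G) : G ⧸ K) := by
    rintro ⟨b⟩
    rcases h b with hb | hb
    · exact ⟨true, QuotientGroup.eq.mpr (by simpa using hb)⟩
    · exact ⟨false, QuotientGroup.eq.mpr (by simpa using hb)⟩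
  simpa [index] using Nat.card_le_card_of_surjective _ hsurj

theorem dvd_card_of_index_le_two [Finite G] {K : Subgroup G} {p : ℕ} (hp : p.Prime)
    (hodd : Odd p) (hK : K.index ≤ 2) (hG : p ∣ Nat.card G) : p ∣ Nat.card K := by
  rw [← K.card_mul_index] at hG
  refine (hp.dvd_mul.mp hG).resolve_right fun hdvd ↦ ?_
  have hp2 : p ≤ 2 := (Nat.le_of_dvd (Nat.pos_of_ne_zero index_ne_zero_of_finite) hdvd).trans hK
  obtain rfl : p = 2 := le_antisymm hp2 hp.two_le
  exact absurd hodd (by decide)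

theorem conj_eq_mulAut_apply_zpowers {x d : G} (σ : MulAut (zpowers x))
    (hd : d * x * d⁻¹ = σ ⟨x, mem_zpowers x⟩) (h : zpowers x) : d * h * d⁻¹ = σ h := by
  obtain ⟨h, k, rfl⟩ := h
  have : (⟨x ^ k, zpow_mem (mem_zpowers x) k⟩ : zpowers x) = ⟨x, mem_zpowers x⟩ ^ k := rfl
  simp only [this, map_zpow, SubgroupClass.coe_zpow, ← hd, conj_zpow]

theorem mem_range_normalizerMonoidHom_zpowers {x : G} (σ : MulAut (zpowers x))
    (h : IsConj x (σ ⟨x, mem_zpowers x⟩)) : σ ∈ (zpowers x).normalizerMonoidHom.range := by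
  obtain ⟨d, hd⟩ := isConj_iff.mp h
  have hconj := conj_eq_mulAut_apply_zpowers σ hd
  have hnorm : d ∈ normalizer (zpowers x : Set G) := fun y ↦ by
    refine ⟨fun hy ↦ hconj ⟨y, hy⟩ ▸ (σ ⟨y, hy⟩).2, fun hy ↦ ?_⟩
    obtain ⟨z, hz⟩ := σ.surjective ⟨_, hy⟩
    have : d * z * d⁻¹ = d * y * d⁻¹ := (hconj z).trans (congrArg Subtype.val hz)
    exact mul_left_cancel (mul_right_cancel this) ▸ z.2
  exact ⟨⟨d, hnorm⟩, MulEquiv.ext fun z ↦ Subtype.ext (hconj z)⟩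

end Subgroup

open scoped IsMulCommutative in
theorem IsInvSemiRational.index_range_normalizerMonoidHom_le_two {G : Type*} [Group G]
    (hG : IsInvSemiRational G) (H : Subgroup G) [hH : IsCyclic H] :
    H.normalizerMonoidHom.range.index ≤ 2 := by
  obtain ⟨x, rfl⟩ := (H.isCyclic_iff_exists_zpowers_eq_top).mp hH
  refine index_le_two_of_forall_mem_or_mul_mem (MulEquiv.inv _) fun σ ↦ ?_
  set gen : zpowers x := ⟨x, mem_zpowers x⟩
  obtain ⟨k, hk⟩ := (σ gen).2
  obtain ⟨z, hz⟩ := σ.surjective gen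
  obtain ⟨_, m, rfl⟩ := z
  have hgen : (x ^ k) ^ m = x := by
    have : σ (gen ^ m) = gen := hz
    rw [map_zpow] at this
    simpa [← hk] using congrArg Subtype.val this
  rcases hG x k (Int.gcd_orderOf_eq_one_of_zpow_zpow_eq_self hgen) with hconj | hconj
  · left
    exact mem_range_normalizerMonoidHom_zpowers σ (by simpa [hk] using hconj.symm)
  · right
    exact mem_range_normalizerMonoidHom_zpowers _ (by simpa [hk] using hconj.symm.inv)

theorem Sylow.not_dvd_card_range_normalizerMonoidHom {G : Type*} [Group G] [Finite G] {p : ℕ}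
    [Fact p.Prime] (P : Sylow p G) [IsMulCommutative P] :
    ¬ p ∣ Nat.card (P : Subgroup G).normalizerMonoidHom.range := by
  rw [← index_ker, normalizerMonoidHom_ker, ← relIndex]
  exact fun hdvd ↦ P.not_dvd_index <| hdvd.trans <|
    (relIndex_dvd_of_le_left _ (le_centralizer _)).trans (relIndex_dvd_index_of_le le_normalizer)

theorem stmt_11 {G : Type*} [Group G] [Finite G] (h : IsInvSemiRational G)
    (p : ℕ) [Fact p.Prime] (hp : Odd p) (P : Sylow p G)
    (hcyc : IsCyclic P) : Nat.card P ≤ p := by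
  obtain ⟨f, hf⟩ := P.2.exists_card_eq
  by_contra! hlt
  have hf2 : 2 ≤ f := by
    by_contra! hf1
    have := Nat.pow_le_pow_right hp.pos (Nat.le_of_lt_succ hf1)
    rw [pow_one, ← hf] at this
    omega
  have hdvd : p ∣ Nat.card (MulAut P) := by
    rw [IsCyclic.card_mulAut, hf, Nat.totient_prime_pow Fact.out (by omega)]
    exact (dvd_pow_self p (by omega)).mul_right _
  exact P.not_dvd_card_range_normalizerMonoidHom <|
    dvd_card_of_index_le_two Fact.out hp (h.index_range_normalizerMonoidHom_le_two P) hdvd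
end
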